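/- Let H = θ Π P Πᵀ be an n×n symmetric matrix of rank K, where θ > 0, Π ∈ ℝ^{n×K}, and P ∈ ℝ^{K×K} is symmetric. If V ∈ ℝ^{n×K} is the matrix of orthonormal eigenvectors of H corresponding to its K nonzero eigenvalues, then there exists a matrix B ∈ ℝ^{K×K} such that V = Π B; moreover B Bᵀ = (Πᵀ Π)^{−1} whenever Πᵀ Π is invertible. -/

import Mathlib

/-!
Since `H V = V D` with `D` invertible, `V = H V D⁻¹ = Π (θ P Πᵀ V D⁻¹)`: the eigenvectors of the
nonzero eigenvalues lie in the column space of `Π`. Substituting `V = Π B` into `Vᵀ V = I` gives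
`Bᵀ (Πᵀ Π) B = I`, and in a matrix ring a one-sided inverse is two-sided, so `B Bᵀ = (Πᵀ Π)⁻¹`.
-/

open Matrix

namespace Matrix

variable {m k R : Type*} [Fintype m] [Fintype k] [DecidableEq k] [CommRing R]

theorem mul_eq_mul_diagonal_of_eq_mul_diagonal_mul_transpose {A : Matrix m m R}
    {V : Matrix m k R} {d : k → R} (hA : A = V * diagonal d * Vᵀ) (hV : Vᵀ * V = 1) :
    A * V = V * diagonal d := by
  rw [hA, Matrix.mul_assoc, Matrix.mul_assoc, hV, Matrix.mul_one]

theorem eq_mul_mul_inv_of_mul_eq_mul {A : Matrix m m R} {V : Matrix m k R} {D : Matrix k k R}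
    (hD : IsUnit D.det) (hAV : A * V = V * D) : V = A * (V * D⁻¹) := by
  rw [← Matrix.mul_assoc, hAV, mul_nonsing_inv_cancel_right _ _ hD]

theorem mul_transpose_eq_inv_of_transpose_mul_mul_eq_one {B M : Matrix k k R}
    (h : Bᵀ * M * B = 1) : B * Bᵀ = M⁻¹ := by
  have hMB : M * B * Bᵀ = 1 := mul_eq_one_comm.mp (by rwa [← Matrix.mul_assoc])
  exact (inv_eq_right_inv (by rwa [Matrix.mul_assoc] at hMB)).symm

end Matrix

theorem simple_stmt1_general
    (n K : ℕ) (θ : ℝ)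
    (Pi : Matrix (Fin n) (Fin K) ℝ) (P : Matrix (Fin K) (Fin K) ℝ)
    (H : Matrix (Fin n) (Fin n) ℝ)
    (hH : H = θ • (Pi * P * Pi.transpose))
    (V : Matrix (Fin n) (Fin K) ℝ) (d : Fin K → ℝ)
    (hd : ∀ k, d k ≠ 0)
    (hdecomp : H = V * Matrix.diagonal d * V.transpose)
    (horth : V.transpose * V = 1) :
    ∃ B : Matrix (Fin K) (Fin K) ℝ,
      V = Pi * B ∧
        (IsUnit (Pi.transpose * Pi) → B * B.transpose = (Pi.transpose * Pi)⁻¹) := by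
  have hD : IsUnit (diagonal d).det := by
    rw [det_diagonal]
    exact (Finset.prod_ne_zero_iff.mpr fun k _ => hd k).isUnit
  have hV := eq_mul_mul_inv_of_mul_eq_mul hD
    (mul_eq_mul_diagonal_of_eq_mul_diagonal_mul_transpose hdecomp horth)
  set B := θ • (P * Piᵀ * (V * (diagonal d)⁻¹))
  have hVB : V = Pi * B := by
    rw [hV, hH]
    simp only [B, Matrix.smul_mul, Matrix.mul_smul, Matrix.mul_assoc]
  refine ⟨B, hVB, fun _ => mul_transpose_eq_inv_of_transpose_mul_mul_eq_one ?_⟩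
  rw [← horth, hVB, transpose_mul, Matrix.mul_assoc, Matrix.mul_assoc, Matrix.mul_assoc]

/-- If `H = θ • Π P Πᵀ` has rank `K` with eigendecomposition `H = V D Vᵀ`,
`D` a diagonal matrix of nonzero eigenvalues and `VᵀV = I`, then there is `B` with `V = Π B`;
moreover `B Bᵀ = (ΠᵀΠ)⁻¹` whenever `ΠᵀΠ` is invertible. -/
theorem simple_stmt1
    (n K : ℕ) (θ : ℝ) (hθ : 0 < θ)
    (Pi : Matrix (Fin n) (Fin K) ℝ) (P : Matrix (Fin K) (Fin K) ℝ)
    (hP : P.IsSymm)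
    (H : Matrix (Fin n) (Fin n) ℝ)
    (hH : H = θ • (Pi * P * Pi.transpose))
    (hrank : H.rank = K)
    (V : Matrix (Fin n) (Fin K) ℝ) (d : Fin K → ℝ)
    (hd : ∀ k, d k ≠ 0)
    (hdecomp : H = V * Matrix.diagonal d * V.transpose)
    (horth : V.transpose * V = 1) :
    ∃ B : Matrix (Fin K) (Fin K) ℝ,
      V = Pi * B ∧
        (IsUnit (Pi.transpose * Pi) → B * B.transpose = (Pi.transpose * Pi)⁻¹) :=
  simple_stmt1_general n K θ Pi P H hH V d hd hdecomp horth
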